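/- arXiv:2505.01169 — 5 statements merged into one kernel-verified Lean document; each statement's English description precedes it below -/
import Mathlib

section
/- Let d be a positive integer. Let φ^η and φ^θ be functions assigning to each pair (s,t) with 0 ≤ s ≤ t ≤ 1 a map from ℝ^d to ℝ^d. Assume φ^η satisfies the initial condition φ^η_{s,s}(x) = x for all s ∈ [0,1] and x ∈ ℝ^d, and the consistency property φ^η_{u,t}(φ^η_{s,u}(x)) = φ^η_{s,t}(x) for all 0 ≤ s ≤ u ≤ t ≤ 1 and x ∈ ℝ^d; assume φ^θ satisfies φ^θ_{s,s}(x) = x for all s ∈ [0,1] and x ∈ ℝ^d. Suppose there exists τ* > 0 such that for all x ∈ ℝ^d, all 0 ≤ s < t ≤ 1, and all τ with 0 < τ ≤ min{τ*, t−s}: (a) φ^θ_{s,s+τ}(x) = φ^η_{s,s+τ}(x), and (b) φ^θ_{s,t}(x) = φ^θ_{t−τ,t}(φ^θ_{s,t−τ}(x)). Then φ^θ_{s,t}(x) = φ^η_{s,t}(x) for all 0 ≤ s ≤ t ≤ 1 and all x ∈ ℝ^d. -/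
/-!
Induction on the number `n` of steps of length `τ*` needed to cover `[s, t]`. An interval of
length at most `τ*` is covered by (a) directly. A longer one is split at `u = t - τ*`: by (b),
`φ^θ_{s,t} = φ^θ_{u,t} ∘ φ^θ_{s,u}`; the induction hypothesis replaces `φ^θ_{s,u}` by
`φ^η_{s,u}`, (a) replaces `φ^θ_{u,t}` by `φ^η_{u,t}`, and consistency of `φ^η` reassembles
`φ^η_{s,t}`.
-/

section FlowExtension

variable {X : Type*} {φη φθ : ℝ → ℝ → X → X} {τstar : ℝ}

lemma flow_eq_of_sub_le
    (hη_init : ∀ s : ℝ, 0 ≤ s → s ≤ 1 → ∀ x, φη s s x = x)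
    (hθ_init : ∀ s : ℝ, 0 ≤ s → s ≤ 1 → ∀ x, φθ s s x = x)
    (ha : ∀ (x : X) (s t τ : ℝ), 0 ≤ s → s < t → t ≤ 1 →
      0 < τ → τ ≤ min τstar (t - s) → φθ s (s + τ) x = φη s (s + τ) x)
    {s t : ℝ} (hs : 0 ≤ s) (hst : s ≤ t) (ht : t ≤ 1) (hshort : t - s ≤ τstar) (x : X) :
    φθ s t x = φη s t x := by
  rcases hst.eq_or_lt with rfl | hlt
  · rw [hθ_init s hs ht, hη_init s hs ht]
  · simpa using ha x s t (t - s) hs hlt ht (by linarith) (le_min hshort le_rfl)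

lemma flow_eq_of_sub_le_nat_mul
    (hη_init : ∀ s : ℝ, 0 ≤ s → s ≤ 1 → ∀ x, φη s s x = x)
    (hη_cons : ∀ s u t : ℝ, 0 ≤ s → s ≤ u → u ≤ t → t ≤ 1 → ∀ x,
      φη u t (φη s u x) = φη s t x)
    (hθ_init : ∀ s : ℝ, 0 ≤ s → s ≤ 1 → ∀ x, φθ s s x = x)
    (hτstar : 0 < τstar)
    (ha : ∀ (x : X) (s t τ : ℝ), 0 ≤ s → s < t → t ≤ 1 →
      0 < τ → τ ≤ min τstar (t - s) → φθ s (s + τ) x = φη s (s + τ) x)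
    (hb : ∀ (x : X) (s t τ : ℝ), 0 ≤ s → s < t → t ≤ 1 →
      0 < τ → τ ≤ min τstar (t - s) → φθ s t x = φθ (t - τ) t (φθ s (t - τ) x))
    (n : ℕ) {s t : ℝ} (hs : 0 ≤ s) (hst : s ≤ t) (ht : t ≤ 1) (hn : t - s ≤ n * τstar)
    (x : X) :
    φθ s t x = φη s t x := by
  induction n generalizing t x with
  | zero =>
    exact flow_eq_of_sub_le hη_init hθ_init ha hs hst ht (by simp at hn; linarith) x
  | succ n ih =>
    rcases le_or_gt (t - s) τstar with hshort | hlong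
    · exact flow_eq_of_sub_le hη_init hθ_init ha hs hst ht hshort x
    set u := t - τstar with hu
    have hsu : s ≤ u := by linarith
    have hθ_split := hb x s t τstar hs (by linarith) ht hτstar (le_min le_rfl hlong.le)
    have hθη_su : φθ s u x = φη s u x := ih hsu (by linarith) (by push_cast at hn; linarith) x
    have hθη_ut : φθ u t (φη s u x) = φη u t (φη s u x) :=
      flow_eq_of_sub_le hη_init hθ_init ha (by linarith) (by linarith) ht (by linarith) _
    rw [hθ_split, hθη_su, hθη_ut, hη_cons s u t hs hsu (by linarith) ht x]

end FlowExtension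

theorem stmt_0_general (d : ℕ)
    (φη φθ : ℝ → ℝ → (Fin d → ℝ) → (Fin d → ℝ))
    (hη_init : ∀ s : ℝ, 0 ≤ s → s ≤ 1 → ∀ x, φη s s x = x)
    (hη_cons : ∀ s u t : ℝ, 0 ≤ s → s ≤ u → u ≤ t → t ≤ 1 → ∀ x,
      φη u t (φη s u x) = φη s t x)
    (hθ_init : ∀ s : ℝ, 0 ≤ s → s ≤ 1 → ∀ x, φθ s s x = x)
    (τstar : ℝ) (hτstar : 0 < τstar)
    (ha : ∀ (x : Fin d → ℝ) (s t τ : ℝ), 0 ≤ s → s < t → t ≤ 1 →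
      0 < τ → τ ≤ min τstar (t - s) → φθ s (s + τ) x = φη s (s + τ) x)
    (hb : ∀ (x : Fin d → ℝ) (s t τ : ℝ), 0 ≤ s → s < t → t ≤ 1 →
      0 < τ → τ ≤ min τstar (t - s) → φθ s t x = φθ (t - τ) t (φθ s (t - τ) x)) :
    ∀ (s t : ℝ), 0 ≤ s → s ≤ t → t ≤ 1 → ∀ x : Fin d → ℝ, φθ s t x = φη s t x := by
  intro s t hs hst ht x
  obtain ⟨n, hn⟩ := exists_nat_ge ((t - s) / τstar)
  exact flow_eq_of_sub_le_nat_mul hη_init hη_cons hθ_init hτstar ha hb n hs hst ht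
    ((div_le_iff₀ hτstar).mp hn) x

/-- Lemma 1 (consistency extension): if a two-timed flow model `φθ` agrees with the
implicit flow `φη` on all short intervals and satisfies the short-interval consistency
property, then it agrees with `φη` everywhere. -/
theorem stmt_0 (d : ℕ) (hd : 0 < d)
    (φη φθ : ℝ → ℝ → (Fin d → ℝ) → (Fin d → ℝ))
    (hη_init : ∀ s : ℝ, 0 ≤ s → s ≤ 1 → ∀ x, φη s s x = x)
    (hη_cons : ∀ s u t : ℝ, 0 ≤ s → s ≤ u → u ≤ t → t ≤ 1 → ∀ x,
      φη u t (φη s u x) = φη s t x)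
    (hθ_init : ∀ s : ℝ, 0 ≤ s → s ≤ 1 → ∀ x, φθ s s x = x)
    (τstar : ℝ) (hτstar : 0 < τstar)
    (ha : ∀ (x : Fin d → ℝ) (s t τ : ℝ), 0 ≤ s → s < t → t ≤ 1 →
      0 < τ → τ ≤ min τstar (t - s) → φθ s (s + τ) x = φη s (s + τ) x)
    (hb : ∀ (x : Fin d → ℝ) (s t τ : ℝ), 0 ≤ s → s < t → t ≤ 1 →
      0 < τ → τ ≤ min τstar (t - s) → φθ s t x = φθ (t - τ) t (φθ s (t - τ) x)) :
    ∀ (s t : ℝ), 0 ≤ s → s ≤ t → t ≤ 1 → ∀ x : Fin d → ℝ, φθ s t x = φη s t x :=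
  stmt_0_general d φη φθ hη_init hη_cons hθ_init τstar hτstar ha hb
end

section
/- Let d be a positive integer. Let v^η : [0,1] × ℝ^d → ℝ^d and let v^θ : {(s,t) : 0 ≤ s ≤ t ≤ 1} × ℝ^d → ℝ^d be jointly continuous. Define φ^θ_{s,t}(x) = x + (t−s)·v^θ_{s,t}(x). Assume: (A) v^θ_{t,t}(x) = v^η_t(x) for all t ∈ [0,1] and x ∈ ℝ^d, and (B) there exists τ* > 0 such that φ^θ_{s,t}(x) = φ^θ_{t−τ,t}(φ^θ_{s,t−τ}(x)) for all x ∈ ℝ^d, all 0 ≤ s < t ≤ 1, and all τ with 0 < τ ≤ min{τ*, t−s}. Then φ^θ satisfies the Lagrangian PDE: for every 0 ≤ s < t ≤ 1 and x ∈ ℝ^d, the map u ↦ φ^θ_{s,u}(x) defined on [s,1] is differentiable at u = t within [s,1] with derivative equal to v^η_t(φ^θ_{s,t}(x)). -/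
/-!
For `u` near `t`, consistency with `τ = |u - t|` splits the flow at the intermediate time
`min t u`, so the increment is itself one step of the flow:
`φθ s u x - φθ s t x = (u - t) • vθ t u (φθ s t x)` for `u > t` and
`φθ s u x - φθ s t x = (u - t) • vθ u t (φθ s u x)` for `u < t`.
Each difference quotient is therefore a value of `vθ` at a point tending to
`(t, t, φθ s t x)`, and continuity of `vθ` gives the limit `vθ t t (φθ s t x) = vη t (φθ s t x)`.
-/

open Set Filter Topology

theorem hasDerivWithinAt_of_sub_eq_smul {E : Type*} [NormedAddCommGroup E] [NormedSpace ℝ E]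
    {f g : ℝ → E} {s : Set ℝ} {t : ℝ} (hg : ContinuousWithinAt g s t)
    (hfg : ∀ᶠ u in 𝓝[s \ {t}] t, f u - f t = (u - t) • g u) :
    HasDerivWithinAt f (g t) s t := by
  rw [hasDerivWithinAt_iff_tendsto_slope]
  refine (hg.tendsto.mono_left (nhdsWithin_mono t sdiff_subset)).congr' ?_
  filter_upwards [hfg, self_mem_nhdsWithin] with u hu hut
  rw [slope_def_module, hu, smul_smul, inv_mul_cancel₀ (sub_ne_zero.2 hut.2), one_smul]

section Flow

variable {E : Type*} [NormedAddCommGroup E] [NormedSpace ℝ E] {v φ : ℝ → ℝ → E → E}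
  {s t : ℝ} {x : E}

theorem continuousOn_flow (hφ : ∀ s t x, φ s t x = x + (t - s) • v s t x)
    {S : Set (ℝ × ℝ × E)} (hv : ContinuousOn (fun q : ℝ × ℝ × E => v q.1 q.2.1 q.2.2) S) :
    ContinuousOn (fun q : ℝ × ℝ × E => φ q.1 q.2.1 q.2.2) S := by
  simp only [hφ]
  fun_prop

variable (hφ : ∀ s t x, φ s t x = x + (t - s) • v s t x)
  (hv : ContinuousOn (fun q : ℝ × ℝ × E => v q.1 q.2.1 q.2.2)
    {q : ℝ × ℝ × E | 0 ≤ q.1 ∧ q.1 ≤ q.2.1 ∧ q.2.1 ≤ 1})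
include hφ hv

theorem hasDerivWithinAt_flow_Icc_right (ht₀ : 0 ≤ t) (ht₁ : t ≤ 1)
    (hcomp : ∀ᶠ u in 𝓝[Ioc t 1] t, φ s u x = φ t u (φ s t x)) :
    HasDerivWithinAt (fun u => φ s u x) (v t t (φ s t x)) (Icc t 1) t := by
  refine hasDerivWithinAt_of_sub_eq_smul (g := fun u => v t u (φ s t x)) ?_ ?_
  · exact (hv _ ⟨ht₀, le_rfl, ht₁⟩).comp (f := fun u => (t, u, φ s t x)) (by fun_prop)
      fun u hu => ⟨ht₀, hu.1, hu.2⟩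
  · rw [Icc_sdiff_left]
    filter_upwards [hcomp] with u hu
    rw [hu, hφ t u]
    abel

theorem hasDerivWithinAt_flow_Icc_left (hs : 0 ≤ s) (hst : s ≤ t) (ht : t ≤ 1)
    (hcomp : ∀ᶠ u in 𝓝[Ico s t] t, φ s t x = φ u t (φ s u x)) :
    HasDerivWithinAt (fun u => φ s u x) (v t t (φ s t x)) (Icc s t) t := by
  refine hasDerivWithinAt_of_sub_eq_smul (g := fun u => v u t (φ s u x)) ?_ ?_
  · have hφ_cont : ContinuousWithinAt (fun u => φ s u x) (Icc s t) t :=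
      (continuousOn_flow hφ hv _ ⟨hs, hst, ht⟩).comp (f := fun u => (s, u, x)) (by fun_prop)
        fun u hu => ⟨hs, hu.1, hu.2.trans ht⟩
    exact (hv _ ⟨hs.trans hst, le_rfl, ht⟩).comp (f := fun u => (u, t, φ s u x))
      (continuousWithinAt_id.prodMk (continuousWithinAt_const.prodMk hφ_cont))
      fun u hu => ⟨hs.trans hu.1, hu.2, ht⟩
  · rw [Icc_sdiff_right]
    filter_upwards [hcomp] with u hu
    rw [hu, hφ u t]
    module

end Flow

theorem stmt_1_general (d : ℕ)
    (vη : ℝ → (Fin d → ℝ) → (Fin d → ℝ))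
    (vθ : ℝ → ℝ → (Fin d → ℝ) → (Fin d → ℝ))
    (hvθ_cont : ContinuousOn (fun q : ℝ × ℝ × (Fin d → ℝ) => vθ q.1 q.2.1 q.2.2)
      {q : ℝ × ℝ × (Fin d → ℝ) | 0 ≤ q.1 ∧ q.1 ≤ q.2.1 ∧ q.2.1 ≤ 1})
    (φθ : ℝ → ℝ → (Fin d → ℝ) → (Fin d → ℝ))
    (hφθ : ∀ (s t : ℝ) (x : Fin d → ℝ), φθ s t x = x + (t - s) • vθ s t x)
    (hA : ∀ t : ℝ, 0 ≤ t → t ≤ 1 → ∀ x : Fin d → ℝ, vθ t t x = vη t x)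
    (τstar : ℝ) (hτstar : 0 < τstar)
    (hB : ∀ (x : Fin d → ℝ) (s t τ : ℝ), 0 ≤ s → s < t → t ≤ 1 →
      0 < τ → τ ≤ min τstar (t - s) → φθ s t x = φθ (t - τ) t (φθ s (t - τ) x)) :
    ∀ (s t : ℝ), 0 ≤ s → s < t → t ≤ 1 → ∀ x : Fin d → ℝ,
      HasDerivWithinAt (fun u : ℝ => φθ s u x) (vη t (φθ s t x)) (Set.Icc s 1) t := by
  intro s t hs hst ht x
  have hnear : Ioo (t - τstar) (t + τstar) ∈ 𝓝 t := Ioo_mem_nhds (by linarith) (by linarith)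
  have hright : ∀ᶠ u in 𝓝[Ioc t 1] t, φθ s u x = φθ t u (φθ s t x) := by
    filter_upwards [self_mem_nhdsWithin, nhdsWithin_le_nhds hnear] with u ⟨htu, hu⟩ hut
    have h := hB x s u (u - t) hs (hst.trans htu) hu (sub_pos.2 htu)
      (le_min (by linarith [hut.2]) (by linarith))
    rwa [sub_sub_cancel] at h
  have hleft : ∀ᶠ u in 𝓝[Ico s t] t, φθ s t x = φθ u t (φθ s u x) := by
    filter_upwards [self_mem_nhdsWithin, nhdsWithin_le_nhds hnear] with u ⟨hsu, hut⟩ htu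
    have h := hB x s t (t - u) hs hst ht (sub_pos.2 hut)
      (le_min (by linarith [htu.1]) (by linarith))
    rwa [sub_sub_cancel] at h
  rw [← hA t (hs.trans hst.le) ht, ← Icc_union_Icc_eq_Icc hst.le ht]
  exact (hasDerivWithinAt_flow_Icc_left hφθ hvθ_cont hs hst.le ht hleft).union
    (hasDerivWithinAt_flow_Icc_right hφθ hvθ_cont (hs.trans hst.le) ht hright)

/-- Lemma 2: if the average velocity model `vθ` matches the teacher velocity `vη` on the
diagonal and the induced TTFM `φθ` satisfies short-interval consistency, then `φθ`
satisfies the Lagrangian PDE: the partial derivative of `φθ s t x` in the terminal time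
`t` (within `[s, 1]`) equals `vη t (φθ s t x)`. -/
theorem stmt_1 (d : ℕ) (hd : 0 < d)
    (vη : ℝ → (Fin d → ℝ) → (Fin d → ℝ))
    (vθ : ℝ → ℝ → (Fin d → ℝ) → (Fin d → ℝ))
    (hvη_cont : ContinuousOn (fun q : ℝ × (Fin d → ℝ) => vη q.1 q.2)
      ((Set.Icc (0 : ℝ) 1) ×ˢ (Set.univ : Set (Fin d → ℝ))))
    (hvθ_cont : ContinuousOn (fun q : ℝ × ℝ × (Fin d → ℝ) => vθ q.1 q.2.1 q.2.2)
      {q : ℝ × ℝ × (Fin d → ℝ) | 0 ≤ q.1 ∧ q.1 ≤ q.2.1 ∧ q.2.1 ≤ 1})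
    (φθ : ℝ → ℝ → (Fin d → ℝ) → (Fin d → ℝ))
    (hφθ : ∀ (s t : ℝ) (x : Fin d → ℝ), φθ s t x = x + (t - s) • vθ s t x)
    (hA : ∀ t : ℝ, 0 ≤ t → t ≤ 1 → ∀ x : Fin d → ℝ, vθ t t x = vη t x)
    (τstar : ℝ) (hτstar : 0 < τstar)
    (hB : ∀ (x : Fin d → ℝ) (s t τ : ℝ), 0 ≤ s → s < t → t ≤ 1 →
      0 < τ → τ ≤ min τstar (t - s) → φθ s t x = φθ (t - τ) t (φθ s (t - τ) x)) :
    ∀ (s t : ℝ), 0 ≤ s → s < t → t ≤ 1 → ∀ x : Fin d → ℝ,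
      HasDerivWithinAt (fun u : ℝ => φθ s u x) (vη t (φθ s t x)) (Set.Icc s 1) t :=
  stmt_1_general d vη vθ hvθ_cont φθ hφθ hA τstar hτstar hB
end

section
/- Let d and N be positive integers and set τ = 1/N. Let v^θ : {(s,t) : 0 ≤ s ≤ t ≤ 1} × ℝ^d → ℝ^d be jointly continuous and define φ^θ_{s,t}(x) = x + (t−s)·v^θ_{s,t}(x). For each s ∈ [0, 1−τ] let S_s : ℝ^d → ℝ^d be continuous (the one-step ODE solver map carrying time s to time s+τ), and for each s ∈ [0, 1−τ] let p_s be a Borel probability measure on ℝ^d with full support (every nonempty open set has positive measure). Assume: (IAVM) for every s ∈ [0, 1−τ], ∫_{ℝ^d} ‖v^θ_{s,s+τ}(x) − (S_s(x) − x)/τ‖² dp_s(x) = 0; and (TVM) for every s ∈ [0, 1−τ], ∫_{s+τ}^{1} ∫_{ℝ^d} ‖(φ^θ_{s,t}(x) − φ^θ_{s,t−τ}(x))/τ − v^θ_{t−τ,t}(φ^θ_{s,t−τ}(x))‖² dp_s(x) dt = 0. Then for all integers m, n with 0 ≤ m ≤ n ≤ N and all x ∈ ℝ^d, φ^θ_{mτ,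 nτ}(x) = (S_{(n−1)τ} ∘ S_{(n−2)τ} ∘ ⋯ ∘ S_{mτ})(x), where the empty composition (case m = n) is the identity map. -/
open MeasureTheory

/-- `solverComp S τ m k x` is the composition `S_{(m+k−1)τ} ∘ ⋯ ∘ S_{(m+1)τ} ∘ S_{mτ}`
applied to `x` (the empty composition, `k = 0`, is the identity). -/
def solverComp {d : ℕ} (S : ℝ → (Fin d → ℝ) → (Fin d → ℝ)) (τ : ℝ) (m : ℕ) :
    ℕ → (Fin d → ℝ) → (Fin d → ℝ)
  | 0, x => x
  | k + 1, x => S (((m : ℝ) + k) * τ) (solverComp S τ m k x)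

/-! Each loss integrates a continuous nonnegative integrand against a measure charging every
nonempty open set (for TVM, also Lebesgue measure on a nondegenerate time interval), so the
integrand vanishes identically. Vanishing IAVM says `φ s (s + τ) = S s`; vanishing TVM says
`φ s t = φ (t - τ) t ∘ φ s (t - τ)`. Peeling off the last step of length `τ` from
`φ (m τ) (n τ)` therefore produces the solver composition, by induction on `n - m`. -/

open Set
open scoped ENNReal

section FullSupport

variable {X : Type*} [TopologicalSpace X] [MeasurableSpace X] [OpensMeasurableSpace X]
  {μ : Measure X} [μ.IsOpenPosMeasure]

theorem eq_zero_of_lintegral_eq_zero {f : X → ℝ≥0∞} (hf : Continuous f)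
    (h : ∫⁻ x, f x ∂μ = 0) : f = 0 :=
  (hf.ae_eq_iff_eq μ continuous_const).1 ((lintegral_eq_zero_iff' hf.aemeasurable).1 h)

theorem eqOn_zero_of_setLIntegral_lintegral_eq_zero [SFinite μ] {a b : ℝ} (hab : a ≠ b)
    {f : ℝ → X → ℝ≥0∞} (hf : ContinuousOn (Function.uncurry f) (Icc a b ×ˢ univ))
    (h : ∫⁻ t in Icc a b, ∫⁻ x, f t x ∂μ = 0) : ∀ t ∈ Icc a b, f t = 0 := by
  have hmeas : AEMeasurable (Function.uncurry f) ((volume.restrict (Icc a b)).prod μ) := by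
    rw [Measure.restrict_prod_eq_prod_univ]
    exact hf.aemeasurable (measurableSet_Icc.prod MeasurableSet.univ)
  have hslice : ∀ t ∈ Icc a b, Continuous (f t) := fun t ht =>
    continuousOn_univ.1 <|
      hf.comp (continuousOn_const.prodMk continuousOn_id) fun x _ => ⟨ht, mem_univ x⟩
  have hae : ∀ᵐ t ∂volume.restrict (Icc a b), f t = 0 := by
    filter_upwards [(lintegral_eq_zero_iff' hmeas.lintegral_prod_right).1 h,
      ae_restrict_mem measurableSet_Icc] with t ht htab
    exact eq_zero_of_lintegral_eq_zero (hslice t htab) ht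
  intro t ht
  funext x
  refine Measure.eqOn_Icc_of_ae_eq volume hab (f := fun t => f t x) (g := fun _ => 0) ?_ ?_
    continuousOn_const ht
  · filter_upwards [hae] with t ht using congrFun ht x
  · exact hf.comp (continuousOn_id.prodMk continuousOn_const) fun t ht => ⟨ht, mem_univ x⟩

end FullSupport

theorem eq_of_ofReal_norm_sub_sq_eq_zero {E : Type*} [NormedAddCommGroup E] {u v : E}
    (h : ENNReal.ofReal (‖u - v‖ ^ 2) = 0) : u = v := by
  rw [ENNReal.ofReal_eq_zero] at h
  exact sub_eq_zero.1 (norm_eq_zero.1 (pow_eq_zero_iff two_ne_zero |>.1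
    (le_antisymm h (sq_nonneg _))))

def timeSimplex (E : Type*) : Set (ℝ × ℝ × E) := {q | 0 ≤ q.1 ∧ q.1 ≤ q.2.1 ∧ q.2.1 ≤ 1}

section Flow

variable {E : Type*} [NormedAddCommGroup E] {v φ : ℝ → ℝ → E → E} {τ s : ℝ}

theorem ContinuousOn.comp_timeSimplex {α : Type*} [TopologicalSpace α]
    (hv : ContinuousOn (fun q : ℝ × ℝ × E => v q.1 q.2.1 q.2.2) (timeSimplex E))
    {T : Set α} {σ t : α → ℝ} {y : α → E} (hσ : ContinuousOn σ T) (ht : ContinuousOn t T)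
    (hy : ContinuousOn y T) (hT : ∀ q ∈ T, 0 ≤ σ q ∧ σ q ≤ t q ∧ t q ≤ 1) :
    ContinuousOn (fun q => v (σ q) (t q) (y q)) T :=
  hv.comp (hσ.prodMk (ht.prodMk hy)) hT

variable [NormedSpace ℝ E] (hφ : ∀ s t x, φ s t x = x + (t - s) • v s t x)
include hφ

theorem flow_self (x : E) : φ s s x = x := by
  simp [hφ]

variable (hv : ContinuousOn (fun q : ℝ × ℝ × E => v q.1 q.2.1 q.2.2) (timeSimplex E))
include hv

theorem continuousOn_tvm_integrand (hτ : 0 ≤ τ) (hs : 0 ≤ s) :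
    ContinuousOn (fun q : ℝ × E => ENNReal.ofReal
      (‖τ⁻¹ • (φ s q.1 q.2 - φ s (q.1 - τ) q.2) - v (q.1 - τ) q.1 (φ s (q.1 - τ) q.2)‖ ^ 2))
      (Icc (s + τ) 1 ×ˢ univ) := by
  have hφ₁ : ContinuousOn (fun q : ℝ × E => φ s q.1 q.2) (Icc (s + τ) 1 ×ˢ univ) := by
    simp only [hφ]
    refine continuousOn_snd.add ((continuousOn_fst.sub continuousOn_const).smul ?_)
    exact hv.comp_timeSimplex continuousOn_const continuousOn_fst continuousOn_snd
      fun q hq => ⟨hs, by linarith [hq.1.1], hq.1.2⟩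
  have hφ₂ : ContinuousOn (fun q : ℝ × E => φ s (q.1 - τ) q.2) (Icc (s + τ) 1 ×ˢ univ) := by
    simp only [hφ]
    refine continuousOn_snd.add (((continuousOn_fst.sub continuousOn_const).sub
      continuousOn_const).smul ?_)
    exact hv.comp_timeSimplex continuousOn_const (continuousOn_fst.sub continuousOn_const)
      continuousOn_snd fun q hq => ⟨hs, by linarith [hq.1.1], by linarith [hq.1.2]⟩
  have hv₃ := hv.comp_timeSimplex (σ := fun q : ℝ × E => q.1 - τ)
    (continuousOn_fst.sub continuousOn_const) continuousOn_fst hφ₂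
    fun q hq => ⟨by linarith [hq.1.1], by linarith, hq.1.2⟩
  exact ENNReal.continuous_ofReal.comp_continuousOn
    ((((hφ₁.sub hφ₂).const_smul τ⁻¹).sub hv₃).norm.pow 2)

variable [MeasurableSpace E] [OpensMeasurableSpace E] {μ : Measure E} [μ.IsOpenPosMeasure]

theorem flow_add_eq_of_iavm_eq_zero (hτ : 0 < τ) (hs : s ∈ Icc 0 (1 - τ)) {S : E → E}
    (hS : Continuous S)
    (h : ∫⁻ x, ENNReal.ofReal (‖v s (s + τ) x - τ⁻¹ • (S x - x)‖ ^ 2) ∂μ = 0) (x : E) :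
    φ s (s + τ) x = S x := by
  have hvs : Continuous (v s (s + τ)) := continuousOn_univ.1 <|
    hv.comp_timeSimplex continuousOn_const continuousOn_const continuousOn_id
      fun _ _ => ⟨hs.1, by linarith, by linarith [hs.2]⟩
  have hcont : Continuous fun x => ENNReal.ofReal (‖v s (s + τ) x - τ⁻¹ • (S x - x)‖ ^ 2) :=
    ENNReal.continuous_ofReal.comp (by fun_prop)
  have hres : ENNReal.ofReal (‖v s (s + τ) x - τ⁻¹ • (S x - x)‖ ^ 2) = 0 :=
    congrFun (eq_zero_of_lintegral_eq_zero hcont h) x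
  rw [hφ, eq_of_ofReal_norm_sub_sq_eq_zero hres, add_sub_cancel_left,
    smul_inv_smul₀ hτ.ne', add_sub_cancel]

theorem flow_eq_flow_comp_of_tvm_eq_zero [SFinite μ] (hτ : 0 < τ) (hs : 0 ≤ s)
    (h : ∫⁻ t in Icc (s + τ) 1, ∫⁻ x, ENNReal.ofReal
      (‖τ⁻¹ • (φ s t x - φ s (t - τ) x) - v (t - τ) t (φ s (t - τ) x)‖ ^ 2) ∂μ = 0)
    {t : ℝ} (ht : t ∈ Icc (s + τ) 1) (x : E) :
    φ s t x = φ (t - τ) t (φ s (t - τ) x) := by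
  -- `Icc (s + τ) 1` may be a single point, where the loss carries no information.
  rcases eq_or_ne t (s + τ) with rfl | hne
  · rw [add_sub_cancel_right, flow_self hφ]
  have hres := congrFun (eqOn_zero_of_setLIntegral_lintegral_eq_zero
    (ht.1.lt_of_ne' hne |>.trans_le ht.2).ne
    (continuousOn_tvm_integrand hφ hv hτ.le hs) h t ht) x
  rw [hφ (t - τ), ← eq_of_ofReal_norm_sub_sq_eq_zero hres, sub_sub_cancel, smul_inv_smul₀ hτ.ne',
    add_sub_cancel]

theorem flow_eq_solver_comp_flow {S : ℝ → E → E} {p : ℝ → Measure E}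
    (hτ : 0 < τ) (hS : ∀ s ∈ Icc 0 (1 - τ), Continuous (S s))
    (hp_pos : ∀ s ∈ Icc 0 (1 - τ), (p s).IsOpenPosMeasure)
    (hp_fin : ∀ s ∈ Icc 0 (1 - τ), SFinite (p s))
    (hIAVM : ∀ s ∈ Icc 0 (1 - τ),
      ∫⁻ x, ENNReal.ofReal (‖v s (s + τ) x - τ⁻¹ • (S s x - x)‖ ^ 2) ∂(p s) = 0)
    (hTVM : ∀ s ∈ Icc 0 (1 - τ), ∫⁻ t in Icc (s + τ) 1, ∫⁻ x, ENNReal.ofReal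
      (‖τ⁻¹ • (φ s t x - φ s (t - τ) x) - v (t - τ) t (φ s (t - τ) x)‖ ^ 2) ∂(p s) = 0)
    (hs : s ∈ Icc 0 (1 - τ)) {t : ℝ} (ht : t ∈ Icc (s + τ) 1) (x : E) :
    φ s t x = S (t - τ) (φ s (t - τ) x) := by
  have ht' : t - τ ∈ Icc 0 (1 - τ) := ⟨by linarith [hs.1, ht.1], by linarith [ht.2]⟩
  have := hp_pos s hs
  have := hp_fin s hs
  have := hp_pos _ ht'
  have hlast := flow_add_eq_of_iavm_eq_zero hφ hv hτ ht' (hS _ ht') (hIAVM _ ht') (φ s (t - τ) x)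
  rw [sub_add_cancel] at hlast
  rw [flow_eq_flow_comp_of_tvm_eq_zero hφ hv hτ hs.1 (hTVM s hs) ht, hlast]

end Flow

theorem flow_natCast_mul_eq_solverComp {d N : ℕ} {τ : ℝ} {φ : ℝ → ℝ → (Fin d → ℝ) → (Fin d → ℝ)}
    {S : ℝ → (Fin d → ℝ) → (Fin d → ℝ)} (hid : ∀ s x, φ s s x = x)
    (hstep : ∀ m k : ℕ, m + k + 1 ≤ N → ∀ x, φ (m * τ) ((m + k + 1 : ℕ) * τ) x =
      S ((m + k : ℕ) * τ) (φ (m * τ) ((m + k : ℕ) * τ) x))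
    {m k : ℕ} (hmk : m + k ≤ N) (x : Fin d → ℝ) :
    φ (m * τ) ((m + k : ℕ) * τ) x = solverComp S τ m k x := by
  induction k with
  | zero => exact hid _ x
  | succ k ih =>
    rw [← add_assoc, hstep m k hmk x, ih (by omega), solverComp]
    push_cast
    rfl

theorem natCast_mul_mem_Icc_zero_one_sub {N j : ℕ} {τ : ℝ} (hτ : 0 ≤ τ) (hNτ : (N : ℝ) * τ = 1)
    (hj : j + 1 ≤ N) : (j : ℝ) * τ ∈ Icc 0 (1 - τ) := by
  have : ((j : ℝ) + 1) * τ ≤ N * τ := by gcongr; exact_mod_cast hj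
  exact ⟨by positivity, by linarith⟩

theorem stmt_2_general (d N : ℕ) (hN : 0 < N) (τ : ℝ) (hτ : τ = 1 / N)
    (vθ : ℝ → ℝ → (Fin d → ℝ) → (Fin d → ℝ))
    (hvθ_cont : ContinuousOn (fun q : ℝ × ℝ × (Fin d → ℝ) => vθ q.1 q.2.1 q.2.2)
      {q : ℝ × ℝ × (Fin d → ℝ) | 0 ≤ q.1 ∧ q.1 ≤ q.2.1 ∧ q.2.1 ≤ 1})
    (φθ : ℝ → ℝ → (Fin d → ℝ) → (Fin d → ℝ))
    (hφθ : ∀ (s t : ℝ) (x : Fin d → ℝ), φθ s t x = x + (t - s) • vθ s t x)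
    (S : ℝ → (Fin d → ℝ) → (Fin d → ℝ))
    (hS_cont : ∀ s : ℝ, s ∈ Set.Icc (0 : ℝ) (1 - τ) → Continuous (S s))
    (p : ℝ → Measure (Fin d → ℝ))
    (hp_prob : ∀ s : ℝ, s ∈ Set.Icc (0 : ℝ) (1 - τ) → IsProbabilityMeasure (p s))
    (hp_pos : ∀ s : ℝ, s ∈ Set.Icc (0 : ℝ) (1 - τ) →
      ∀ U : Set (Fin d → ℝ), IsOpen U → U.Nonempty → 0 < p s U)
    (hIAVM : ∀ s : ℝ, s ∈ Set.Icc (0 : ℝ) (1 - τ) →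
      ∫⁻ x, ENNReal.ofReal (‖vθ s (s + τ) x - τ⁻¹ • (S s x - x)‖ ^ 2) ∂(p s) = 0)
    (hTVM : ∀ s : ℝ, s ∈ Set.Icc (0 : ℝ) (1 - τ) →
      ∫⁻ t in Set.Icc (s + τ) 1,
        ∫⁻ x, ENNReal.ofReal
          (‖τ⁻¹ • (φθ s t x - φθ s (t - τ) x) - vθ (t - τ) t (φθ s (t - τ) x)‖ ^ 2)
          ∂(p s) = 0) :
    ∀ m n : ℕ, m ≤ n → n ≤ N → ∀ x : Fin d → ℝ,
      φθ ((m : ℝ) * τ) ((n : ℝ) * τ) x = solverComp S τ m (n - m) x := by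
  have hτ0 : 0 < τ := by rw [hτ]; positivity
  have hNτ : (N : ℝ) * τ = 1 := by rw [hτ]; field_simp
  intro m n hmn hnN x
  obtain ⟨k, rfl⟩ := Nat.exists_eq_add_of_le hmn
  rw [Nat.add_sub_cancel_left]
  refine flow_natCast_mul_eq_solverComp (fun _ => flow_self hφθ) (fun m k hmk y => ?_) hnN x
  have hs := natCast_mul_mem_Icc_zero_one_sub hτ0.le hNτ (j := m) (by omega)
  have ht : ((m + k + 1 : ℕ) : ℝ) * τ ∈ Icc ((m : ℝ) * τ + τ) 1 := by
    constructor
    · calc (m : ℝ) * τ + τ = ((m + 1 : ℕ) : ℝ) * τ := by push_cast; ring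
        _ ≤ _ := by gcongr; omega
    · rw [← hNτ]; gcongr
  have hprev : ((m + k + 1 : ℕ) : ℝ) * τ - τ = ((m + k : ℕ) : ℝ) * τ := by push_cast; ring
  rw [flow_eq_solver_comp_flow hφθ hvθ_cont hτ0 hS_cont
    (fun s hs => ⟨fun U hU hne => (hp_pos s hs U hU hne).ne'⟩)
    (fun s hs => have := hp_prob s hs; inferInstance) hIAVM hTVM hs ht, hprev]

/-- Theorem 3: if the IAVM and TVM losses of the (EMA-stabilized) model vanish, then the
trained TTFM `φθ` simulates the one-step ODE solver on multiples of `τ = 1/N` in a single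
function evaluation. -/
theorem stmt_2 (d N : ℕ) (hd : 0 < d) (hN : 0 < N) (τ : ℝ) (hτ : τ = 1 / N)
    (vθ : ℝ → ℝ → (Fin d → ℝ) → (Fin d → ℝ))
    (hvθ_cont : ContinuousOn (fun q : ℝ × ℝ × (Fin d → ℝ) => vθ q.1 q.2.1 q.2.2)
      {q : ℝ × ℝ × (Fin d → ℝ) | 0 ≤ q.1 ∧ q.1 ≤ q.2.1 ∧ q.2.1 ≤ 1})
    (φθ : ℝ → ℝ → (Fin d → ℝ) → (Fin d → ℝ))
    (hφθ : ∀ (s t : ℝ) (x : Fin d → ℝ), φθ s t x = x + (t - s) • vθ s t x)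
    (S : ℝ → (Fin d → ℝ) → (Fin d → ℝ))
    (hS_cont : ∀ s : ℝ, s ∈ Set.Icc (0 : ℝ) (1 - τ) → Continuous (S s))
    (p : ℝ → Measure (Fin d → ℝ))
    (hp_prob : ∀ s : ℝ, s ∈ Set.Icc (0 : ℝ) (1 - τ) → IsProbabilityMeasure (p s))
    (hp_pos : ∀ s : ℝ, s ∈ Set.Icc (0 : ℝ) (1 - τ) →
      ∀ U : Set (Fin d → ℝ), IsOpen U → U.Nonempty → 0 < p s U)
    (hIAVM : ∀ s : ℝ, s ∈ Set.Icc (0 : ℝ) (1 - τ) →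
      ∫⁻ x, ENNReal.ofReal (‖vθ s (s + τ) x - τ⁻¹ • (S s x - x)‖ ^ 2) ∂(p s) = 0)
    (hTVM : ∀ s : ℝ, s ∈ Set.Icc (0 : ℝ) (1 - τ) →
      ∫⁻ t in Set.Icc (s + τ) 1,
        ∫⁻ x, ENNReal.ofReal
          (‖τ⁻¹ • (φθ s t x - φθ s (t - τ) x) - vθ (t - τ) t (φθ s (t - τ) x)‖ ^ 2)
          ∂(p s) = 0) :
    ∀ m n : ℕ, m ≤ n → n ≤ N → ∀ x : Fin d → ℝ,
      φθ ((m : ℝ) * τ) ((n : ℝ) * τ) x = solverComp S τ m (n - m) x :=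
  stmt_2_general d N hN τ hτ vθ hvθ_cont φθ hφθ S hS_cont p hp_prob hp_pos hIAVM hTVM
end

section
/- Let d be a positive integer, τ ∈ (0,1), and s ∈ [0, 1−τ]. Let v : {(a,b) : 0 ≤ a ≤ b ≤ 1} × ℝ^d → ℝ^d be jointly continuous and define φ_{a,b}(x) = x + (b−a)·v_{a,b}(x). Let p be a Borel probability measure on ℝ^d with full support (every nonempty open set has positive measure). If ∫_{s+τ}^{1} ∫_{ℝ^d} ‖(φ_{s,t}(x) − φ_{s,t−τ}(x))/τ − v_{t−τ,t}(φ_{s,t−τ}(x))‖² dp(x) dt = 0, then for every t ∈ [s+τ, 1] and every x ∈ ℝ^d, φ_{s,t}(x) = φ_{t−τ,t}(φ_{s,t−τ}(x)). -/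
/-!
The integrand of the loss is continuous in `(t, x)` on `[s + τ, 1] × ℝ^d`, and both Lebesgue
measure and `p` charge every nonempty open set. By Tonelli the integrand vanishes almost
everywhere for the product measure, hence everywhere on `[s + τ, 1] × ℝ^d`, which is the closure
of its interior as soon as `s + τ < 1`. Since `φ_{t-τ,t}(y) = y + τ v_{t-τ,t}(y)`, the defect
`φ_{s,t}(x) - φ_{t-τ,t}(φ_{s,t-τ}(x))` is `τ` times the vanishing residual. The remaining case
`t = s + τ` holds because `φ_{s,s}` is the identity.
-/

open MeasureTheory Set
open scoped ENNReal

theorem eqOn_zero_of_setLIntegral_lintegral_eq_zero_s5 {α β : Type*}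
    [TopologicalSpace α] [SecondCountableTopology α] [MeasurableSpace α] [BorelSpace α]
    [TopologicalSpace β] [SecondCountableTopology β] [MeasurableSpace β] [BorelSpace β]
    {μ : Measure α} [μ.IsOpenPosMeasure] [SFinite μ]
    {ν : Measure β} [ν.IsOpenPosMeasure] [SFinite ν]
    {s : Set α} (hs : MeasurableSet s) (hs_int : s ⊆ closure (interior s))
    {F : α × β → ℝ≥0∞} (hF : ContinuousOn F (s ×ˢ univ))
    (h : ∫⁻ a in s, ∫⁻ b, F (a, b) ∂ν ∂μ = 0) :
    EqOn F 0 (s ×ˢ univ) := by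
  have hrestrict : (μ.restrict s).prod ν = (μ.prod ν).restrict (s ×ˢ univ) := by
    rw [← Measure.prod_restrict, Measure.restrict_univ]
  have hmeas : AEMeasurable F ((μ.restrict s).prod ν) :=
    hrestrict ▸ hF.aemeasurable (hs.prod MeasurableSet.univ)
  rw [← lintegral_prod F hmeas, lintegral_eq_zero_iff' hmeas, hrestrict] at h
  refine Measure.eqOn_of_ae_eq h hF continuousOn_const ?_
  rw [interior_prod_eq, closure_prod_eq, interior_univ, closure_univ]
  exact prod_mono hs_int subset_rfl

section Flow

variable {E : Type*}

theorem ContinuousOn.comp_ordered_times [TopologicalSpace E] {X : Type*} [TopologicalSpace X]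
    {v : ℝ → ℝ → E → E}
    (hv : ContinuousOn (fun q : ℝ × ℝ × E => v q.1 q.2.1 q.2.2)
      {q : ℝ × ℝ × E | 0 ≤ q.1 ∧ q.1 ≤ q.2.1 ∧ q.2.1 ≤ 1})
    {S : Set X} {a b : X → ℝ} {y : X → E} (ha : ContinuousOn a S) (hb : ContinuousOn b S)
    (hy : ContinuousOn y S) (hab : ∀ z ∈ S, 0 ≤ a z ∧ a z ≤ b z ∧ b z ≤ 1) :
    ContinuousOn (fun z => v (a z) (b z) (y z)) S :=
  hv.comp (ha.prodMk (hb.prodMk hy)) hab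

variable [NormedAddCommGroup E] [NormedSpace ℝ E] {v φ : ℝ → ℝ → E → E}

theorem ContinuousOn.comp_ordered_times_flow {X : Type*} [TopologicalSpace X]
    (hv : ContinuousOn (fun q : ℝ × ℝ × E => v q.1 q.2.1 q.2.2)
      {q : ℝ × ℝ × E | 0 ≤ q.1 ∧ q.1 ≤ q.2.1 ∧ q.2.1 ≤ 1})
    (hφ : ∀ (a b : ℝ) (x : E), φ a b x = x + (b - a) • v a b x)
    {S : Set X} {a b : X → ℝ} {y : X → E} (ha : ContinuousOn a S) (hb : ContinuousOn b S)
    (hy : ContinuousOn y S) (hab : ∀ z ∈ S, 0 ≤ a z ∧ a z ≤ b z ∧ b z ≤ 1) :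
    ContinuousOn (fun z => φ (a z) (b z) (y z)) S := by
  simp only [hφ]
  exact hy.add ((hb.sub ha).smul (hv.comp_ordered_times ha hb hy hab))

noncomputable def tvmResidual (v φ : ℝ → ℝ → E → E) (τ s t : ℝ) (x : E) : E :=
  τ⁻¹ • (φ s t x - φ s (t - τ) x) - v (t - τ) t (φ s (t - τ) x)

theorem continuousOn_tvmResidual
    (hv : ContinuousOn (fun q : ℝ × ℝ × E => v q.1 q.2.1 q.2.2)
      {q : ℝ × ℝ × E | 0 ≤ q.1 ∧ q.1 ≤ q.2.1 ∧ q.2.1 ≤ 1})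
    (hφ : ∀ (a b : ℝ) (x : E), φ a b x = x + (b - a) • v a b x)
    {τ s : ℝ} (hτ : 0 ≤ τ) (hs : 0 ≤ s) :
    ContinuousOn (fun q : ℝ × E => tvmResidual v φ τ s q.1 q.2) (Icc (s + τ) 1 ×ˢ univ) := by
  have hmem : ∀ q ∈ Icc (s + τ) 1 ×ˢ (univ : Set E), s + τ ≤ q.1 ∧ q.1 ≤ 1 :=
    fun q hq => hq.1
  have hflow_prev := hv.comp_ordered_times_flow hφ (a := fun _ => s) (b := fun q => q.1 - τ)
    continuousOn_const (continuousOn_fst.sub continuousOn_const) continuousOn_snd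
    fun q hq => ⟨hs, by linarith [hmem q hq], by linarith [hmem q hq]⟩
  refine (continuousOn_const.smul ((hv.comp_ordered_times_flow hφ (a := fun _ => s)
    continuousOn_const continuousOn_fst continuousOn_snd
    fun q hq => ⟨hs, by linarith [hmem q hq], (hmem q hq).2⟩).sub hflow_prev)).sub
    (hv.comp_ordered_times (a := fun q => q.1 - τ) (continuousOn_fst.sub continuousOn_const)
      continuousOn_fst hflow_prev fun q hq => ⟨by linarith [hmem q hq], by linarith, (hmem q hq).2⟩)

theorem flow_sub_flow_comp_eq_smul_tvmResidual
    (hφ : ∀ (a b : ℝ) (x : E), φ a b x = x + (b - a) • v a b x)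
    {τ : ℝ} (hτ : τ ≠ 0) (s t : ℝ) (x : E) :
    φ s t x - φ (t - τ) t (φ s (t - τ) x) = τ • tvmResidual v φ τ s t x := by
  rw [tvmResidual, hφ (t - τ) t, sub_sub_cancel, smul_sub, smul_smul, mul_inv_cancel₀ hτ,
    one_smul]
  abel

end Flow

theorem stmt_5_general (d : ℕ) (τ : ℝ) (hτ : τ ∈ Set.Ioo (0 : ℝ) 1)
    (s : ℝ) (hs : s ∈ Set.Icc (0 : ℝ) (1 - τ))
    (v : ℝ → ℝ → (Fin d → ℝ) → (Fin d → ℝ))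
    (hv_cont : ContinuousOn (fun q : ℝ × ℝ × (Fin d → ℝ) => v q.1 q.2.1 q.2.2)
      {q : ℝ × ℝ × (Fin d → ℝ) | 0 ≤ q.1 ∧ q.1 ≤ q.2.1 ∧ q.2.1 ≤ 1})
    (φ : ℝ → ℝ → (Fin d → ℝ) → (Fin d → ℝ))
    (hφ : ∀ (a b : ℝ) (x : Fin d → ℝ), φ a b x = x + (b - a) • v a b x)
    (p : Measure (Fin d → ℝ)) [IsProbabilityMeasure p]
    (hp_pos : ∀ U : Set (Fin d → ℝ), IsOpen U → U.Nonempty → 0 < p U)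
    (hTVM : ∫⁻ t in Set.Icc (s + τ) 1,
      ∫⁻ x, ENNReal.ofReal
        (‖τ⁻¹ • (φ s t x - φ s (t - τ) x) - v (t - τ) t (φ s (t - τ) x)‖ ^ 2) ∂p = 0) :
    ∀ t : ℝ, t ∈ Set.Icc (s + τ) 1 → ∀ x : Fin d → ℝ,
      φ s t x = φ (t - τ) t (φ s (t - τ) x) := by
  intro t ht x
  rcases ht.1.eq_or_lt with rfl | hlt
  · simp [hφ]
  have : p.IsOpenPosMeasure := ⟨fun U hU hne => (hp_pos U hU hne).ne'⟩
  have hresidual : tvmResidual v φ τ s t x = 0 := by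
    have hcont := ENNReal.continuous_ofReal.comp_continuousOn
      ((continuousOn_tvmResidual hv_cont hφ hτ.1.le hs.1).norm.pow 2)
    simpa using eqOn_zero_of_setLIntegral_lintegral_eq_zero_s5 measurableSet_Icc
      (closure_interior_Icc (by linarith [ht.2])).symm.subset hcont hTVM
      (mk_mem_prod ht (mem_univ x))
  rw [← sub_eq_zero, flow_sub_flow_comp_eq_smul_tvmResidual hφ hτ.1.ne', hresidual, smul_zero]

/-- Vanishing of the terminal velocity matching (TVM) loss forces the pointwise step-τ
consistency property of the two-timed flow model `φ` parameterized by the average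
velocity model `v` via `φ a b x = x + (b − a) • v a b x`. -/
theorem stmt_5 (d : ℕ) (hd : 0 < d) (τ : ℝ) (hτ : τ ∈ Set.Ioo (0 : ℝ) 1)
    (s : ℝ) (hs : s ∈ Set.Icc (0 : ℝ) (1 - τ))
    (v : ℝ → ℝ → (Fin d → ℝ) → (Fin d → ℝ))
    (hv_cont : ContinuousOn (fun q : ℝ × ℝ × (Fin d → ℝ) => v q.1 q.2.1 q.2.2)
      {q : ℝ × ℝ × (Fin d → ℝ) | 0 ≤ q.1 ∧ q.1 ≤ q.2.1 ∧ q.2.1 ≤ 1})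
    (φ : ℝ → ℝ → (Fin d → ℝ) → (Fin d → ℝ))
    (hφ : ∀ (a b : ℝ) (x : Fin d → ℝ), φ a b x = x + (b - a) • v a b x)
    (p : Measure (Fin d → ℝ)) [IsProbabilityMeasure p]
    (hp_pos : ∀ U : Set (Fin d → ℝ), IsOpen U → U.Nonempty → 0 < p U)
    (hTVM : ∫⁻ t in Set.Icc (s + τ) 1,
      ∫⁻ x, ENNReal.ofReal
        (‖τ⁻¹ • (φ s t x - φ s (t - τ) x) - v (t - τ) t (φ s (t - τ) x)‖ ^ 2) ∂p = 0) :
    ∀ t : ℝ, t ∈ Set.Icc (s + τ) 1 → ∀ x : Fin d → ℝ,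
      φ s t x = φ (t - τ) t (φ s (t - τ) x) :=
  stmt_5_general d τ hτ s hs v hv_cont φ hφ p hp_pos hTVM
end

section
/- Let d be a positive integer. Let v : ℝ × ℝ^d → ℝ^d be continuously differentiable and let p : ℝ × ℝ^d → ℝ be continuously differentiable with p(t,x) > 0 for all (t,x). Assume that p and v satisfy the continuity equation: for all (t,x), ∂_t p(t,x) + ⟨∇_x p(t,x), v(t,x)⟩ + p(t,x)·tr(D_x v(t,x)) = 0, where D_x v denotes the Jacobian of v in the spatial variable and tr its trace. Let φ : ℝ → ℝ^d be differentiable with φ'(t) = v(t, φ(t)) for all t. Then for every t, the map t ↦ log p(t, φ(t)) is differentiable with derivative −tr(D_x v(t, φ(t))). -/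
/-! Along a trajectory, the chain rule gives `d/dt p(t, φ t) = ∂ₜp + ⟨∇ₓp, v⟩`, which the continuity
equation identifies with `-p · tr Dₓv`; dividing by `p > 0` gives the derivative of `log p`. -/

variable {E F : Type*} [NormedAddCommGroup E] [NormedSpace ℝ E]
  [NormedAddCommGroup F] [NormedSpace ℝ F]

theorem hasDerivAt_apply_curve {f : ℝ → E → F} {φ : ℝ → E} {w : E} {t : ℝ}
    (hf : DifferentiableAt ℝ (fun q : ℝ × E => f q.1 q.2) (t, φ t)) (hφ : HasDerivAt φ w t) :
    HasDerivAt (fun u => f u (φ u))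
      (deriv (fun s => f s (φ t)) t + fderiv ℝ (f t) (φ t) w) t := by
  set L := fderiv ℝ (fun q : ℝ × E => f q.1 q.2) (t, φ t)
  have hL := hf.hasFDerivAt
  have htime : HasDerivAt (fun s => f s (φ t)) (L (1, 0)) t :=
    hL.comp_hasDerivAt_of_eq t ((hasDerivAt_id t).prodMk (hasDerivAt_const t (φ t))) rfl
  have hspace : HasFDerivAt (f t) (L.comp (.inr ℝ ℝ E)) (φ t) :=
    hL.comp (φ t) ((hasFDerivAt_const t (φ t)).prodMk (hasFDerivAt_id (φ t)))
  have hsplit : L (1, w) = L (1, 0) + L (0, w) := by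
    rw [← map_add, Prod.mk_add_mk, add_zero, zero_add]
  rw [htime.deriv, hspace.fderiv, ContinuousLinearMap.comp_apply,
    ContinuousLinearMap.inr_apply, ← hsplit]
  exact hL.comp_hasDerivAt_of_eq t ((hasDerivAt_id t).prodMk hφ) rfl

theorem stmt_11_general (d : ℕ)
    (v : ℝ → (Fin d → ℝ) → (Fin d → ℝ))
    (p : ℝ → (Fin d → ℝ) → ℝ)
    (hp_diff : ContDiff ℝ 1 (fun q : ℝ × (Fin d → ℝ) => p q.1 q.2))
    (hp_pos : ∀ (t : ℝ) (x : Fin d → ℝ), 0 < p t x)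
    (hcont_eq : ∀ (t : ℝ) (x : Fin d → ℝ),
      deriv (fun t' : ℝ => p t' x) t
        + (fderiv ℝ (fun x' : Fin d → ℝ => p t x') x) (v t x)
        + p t x * LinearMap.trace ℝ (Fin d → ℝ) (fderiv ℝ (v t) x).toLinearMap = 0)
    (φ : ℝ → (Fin d → ℝ))
    (hφ : ∀ t : ℝ, HasDerivAt φ (v t (φ t)) t) :
    ∀ t : ℝ, HasDerivAt (fun u : ℝ => Real.log (p u (φ u)))
      (-(LinearMap.trace ℝ (Fin d → ℝ) (fderiv ℝ (v t) (φ t)).toLinearMap)) t := by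
  intro t
  set tr := LinearMap.trace ℝ (Fin d → ℝ) (fderiv ℝ (v t) (φ t)).toLinearMap
  have hchain := hasDerivAt_apply_curve (hp_diff.differentiable one_ne_zero _) (hφ t)
  rw [show _ + _ = -(p t (φ t) * tr) by linarith [hcont_eq t (φ t)]] at hchain
  have hpos := hp_pos t (φ t)
  convert hchain.log hpos.ne' using 1
  field_simp

/-- Instantaneous change of variables formula: if a C¹ velocity field `v` and a positive
C¹ density `p` satisfy the continuity equation, then along any trajectory `φ` of the ODE
`φ' t = v t (φ t)`, the log-density `t ↦ log p(t, φ t)` evolves with derivative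
`−tr (D_x v (t, φ t))`. -/
theorem stmt_11 (d : ℕ) (hd : 0 < d)
    (v : ℝ → (Fin d → ℝ) → (Fin d → ℝ))
    (p : ℝ → (Fin d → ℝ) → ℝ)
    (hv_diff : ContDiff ℝ 1 (fun q : ℝ × (Fin d → ℝ) => v q.1 q.2))
    (hp_diff : ContDiff ℝ 1 (fun q : ℝ × (Fin d → ℝ) => p q.1 q.2))
    (hp_pos : ∀ (t : ℝ) (x : Fin d → ℝ), 0 < p t x)
    (hcont_eq : ∀ (t : ℝ) (x : Fin d → ℝ),
      deriv (fun t' : ℝ => p t' x) t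
        + (fderiv ℝ (fun x' : Fin d → ℝ => p t x') x) (v t x)
        + p t x * LinearMap.trace ℝ (Fin d → ℝ) (fderiv ℝ (v t) x).toLinearMap = 0)
    (φ : ℝ → (Fin d → ℝ))
    (hφ : ∀ t : ℝ, HasDerivAt φ (v t (φ t)) t) :
    ∀ t : ℝ, HasDerivAt (fun u : ℝ => Real.log (p u (φ u)))
      (-(LinearMap.trace ℝ (Fin d → ℝ) (fderiv ℝ (v t) (φ t)).toLinearMap)) t :=
  stmt_11_general d v p hp_diff hp_pos hcont_eq φ hφ
end
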